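/- Let a, b, c, d ∈ R = ℂ[s,t,u] be homogeneous of degree n ≥ 1 with no nonconstant common divisor (gcd(a,b,c,d) = 1), and set I = ⟨a,b,c,d⟩ ⊆ R. Assume a, b, c, d have at least one common zero in ℂ³∖{0}. Then the following are equivalent: (1) Syz(a,b,c,d) is a free R-module; (2) the maximal ideal ⟨s,t,u⟩ is not an associated prime of the R-module R/I (i.e., ⟨s,t,u⟩ is not the annihilator of any element of R/I); (3) the colon ideal I : ⟨s,t,u⟩ equals I (i.e., I is saturated with respect to ⟨s,t,u⟩). -/

import Mathlib

open MvPolynomial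

/-- The syzygy module `Syz(a,b,c,d) = {(A,B,C,D) ∈ R⁴ : Aa + Bb + Cc + Dd = 0}`
as an `R`-submodule of `R⁴`, `R = ℂ[s,t,u]`. -/
noncomputable def syzygyModule (a b c d : MvPolynomial (Fin 3) ℂ) :
    Submodule (MvPolynomial (Fin 3) ℂ) (Fin 4 → MvPolynomial (Fin 3) ℂ) where
  carrier := {A | A 0 * a + A 1 * b + A 2 * c + A 3 * d = 0}
  add_mem' := by
    intro A B hA hB
    simp only [Set.mem_setOf_eq, Pi.add_apply] at *
    linear_combination hA + hB
  zero_mem' := by simp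
  smul_mem' := by
    intro r A hA
    simp only [Set.mem_setOf_eq, Pi.smul_apply, smul_eq_mul] at *
    linear_combination r * hA

/-!
Everything turns on exactness in degree one of the Koszul complex of `X 0, X 1, X 2` on `Syz`.
It holds on finite free modules, and it holds on `Syz` exactly when `I = (a, b, c, d)` is
saturated, because the obstruction to moving a Koszul boundary from `R⁴` into `Syz` lies in
`(I : 𝔪) / I`. Conversely, `Syz` is graded (all of `a, b, c, d` have degree `n`), and the
relations among an irredundant homogeneous generating set have all their coefficients in `𝔪`;
Koszul exactness then makes the module of relations equal to `𝔪` times itself, so it vanishes by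
Nakayama and `Syz` is free. As `𝔪` is maximal, it is an associated prime of `R / I` iff
`I : 𝔪 ≠ I`.
-/

namespace MvPolynomial

variable {σ K : Type*} [CommRing K]

theorem X_dvd_sub_aeval_update_zero [DecidableEq σ] (j : σ) (f : MvPolynomial σ K) :
    X j ∣ f - aeval (Function.update X j 0) f := by
  rw [← Ideal.mem_span_singleton, ← Ideal.Quotient.eq]
  suffices h : (Ideal.Quotient.mkₐ K (Ideal.span {X j})).comp (aeval (Function.update X j 0)) =
      Ideal.Quotient.mkₐ K (Ideal.span {(X j : MvPolynomial σ K)}) from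
    (congrArg (· f) h).symm
  refine algHom_ext fun i => ?_
  rcases eq_or_ne i j with rfl | hij
  · simp
  · simp [Function.update_of_ne hij]

theorem exists_eq_X_mul_of_X_mul_eq_X_mul [IsDomain K] {i j : σ} (hij : i ≠ j)
    {g h : MvPolynomial σ K} (e : X i * g = X j * h) : ∃ w, g = X j * w ∧ h = X i * w := by
  obtain ⟨w, rfl⟩ := (X_prime.dvd_or_dvd ⟨h, e⟩).resolve_left
    (by simpa [X_dvd_X] using hij.symm)
  refine ⟨w, rfl, mul_left_cancel₀ (X_ne_zero j) ?_⟩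
  rw [← e]
  ring

theorem homogeneousComponent_mul_of_isHomogeneous {g : MvPolynomial σ K} {n : ℕ}
    (hg : g.IsHomogeneous n) (f : MvPolynomial σ K) (k : ℕ) :
    homogeneousComponent k (f * g) = if n ≤ k then homogeneousComponent (k - n) f * g else 0 := by
  let _ := gradedAlgebra (σ := σ) (R := K)
  simpa only [DirectSum.decompose, Equiv.coe_fn_mk, decomposition.decompose'_apply] using
    DirectSum.coe_decompose_mul_of_right_mem (homogeneousSubmodule σ K) k (a := f)
      ((mem_homogeneousSubmodule n g).mpr hg)

theorem sum_range_homogeneousComponent {φ : MvPolynomial σ K} {N : ℕ}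
    (h : φ.totalDegree ≤ N) : ∑ k ∈ Finset.range (N + 1), homogeneousComponent k φ = φ := by
  rw [← Finset.sum_subset (Finset.range_subset_range.mpr (Nat.succ_le_succ h))
    fun k _ hk => homogeneousComponent_eq_zero k φ (by simpa using hk)]
  exact sum_homogeneousComponent φ

theorem homogeneousComponent_comp_mem_ker {ι : Type*} [Fintype ι] {f : ι → MvPolynomial σ K}
    {n : ℕ} (hf : ∀ i, (f i).IsHomogeneous n) {v : ι → MvPolynomial σ K}
    (hv : v ∈ LinearMap.ker (Fintype.linearCombination (MvPolynomial σ K) f)) (k : ℕ) :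
    homogeneousComponent k ∘ v ∈
      LinearMap.ker (Fintype.linearCombination (MvPolynomial σ K) f) := by
  simp only [LinearMap.mem_ker, Fintype.linearCombination_apply, smul_eq_mul,
    Function.comp_apply] at hv ⊢
  simpa [map_sum, homogeneousComponent_mul_of_isHomogeneous (hf _)] using
    congrArg (homogeneousComponent (k + n)) hv

theorem span_X_fin_three_eq_ker_constantCoeff :
    (Ideal.span {X 0, X 1, X 2} : Ideal (MvPolynomial (Fin 3) K)) = RingHom.ker constantCoeff := by
  have hX : ({X 0, X 1, X 2} : Set (MvPolynomial (Fin 3) K)) = X '' Set.univ := by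
    ext
    simp [Fin.exists_fin_succ, eq_comm]
  ext f
  rw [hX, mem_ideal_span_X_image, RingHom.mem_ker, constantCoeff_eq]
  refine ⟨fun h => by_contra fun h₀ => ?_, fun h m hm => ?_⟩
  · obtain ⟨i, -, hi⟩ := h 0 (mem_support_iff.mpr h₀)
    exact hi rfl
  · obtain ⟨i, hi⟩ := Finsupp.ne_iff.mp (ne_of_mem_of_not_mem hm (by simpa using h))
    exact ⟨i, trivial, hi⟩

theorem isMaximal_span_X_fin_three {k : Type*} [Field k] :
    (Ideal.span {X 0, X 1, X 2} : Ideal (MvPolynomial (Fin 3) k)).IsMaximal := by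
  rw [span_X_fin_three_eq_ker_constantCoeff]
  exact RingHom.ker_isMaximal_of_surjective constantCoeff fun c => ⟨C c, constantCoeff_C _ c⟩

end MvPolynomial

theorem Ideal.mem_colon_span_triple {R : Type*} [CommRing R] {I : Ideal R} {x y z r : R} :
    r ∈ I.colon (Ideal.span {x, y, z}) ↔ r * x ∈ I ∧ r * y ∈ I ∧ r * z ∈ I := by
  simp [Submodule.mem_colon]

theorem Ideal.not_exists_eq_colon_span_singleton_iff {R : Type*} [CommRing R] {I 𝔪 : Ideal R}
    (h𝔪 : 𝔪.IsMaximal) : (¬ ∃ x, 𝔪 = I.colon (Ideal.span {x} : Ideal R)) ↔ I.colon 𝔪 = I := by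
  refine ⟨fun hno => le_antisymm (fun x hx => by_contra fun hxI => hno ⟨x, ?_⟩) Ideal.le_colon,
    fun hsat ⟨x, hx⟩ => h𝔪.ne_top ?_⟩
  · refine h𝔪.eq_of_le (fun h => hxI ?_) fun y hy => ?_
    · simpa using (Ideal.eq_top_iff_one _).mp h
    · simpa [mul_comm] using Submodule.mem_colon.mp hx y hy
  · have hxI : x ∈ I := hsat ▸ Submodule.mem_colon.mpr fun y hy => by
      simpa [mul_comm] using (hx ▸ hy : y ∈ I.colon (Ideal.span {x} : Ideal R))
    rw [hx, Ideal.eq_top_iff_one]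
    simpa using hxI

theorem Submodule.eq_bot_of_le_smul_of_ne_top {R M : Type*} [CommRing R] [IsDomain R]
    [AddCommGroup M] [Module R M] [Module.IsTorsionFree R M] {I : Ideal R} (hI : I ≠ ⊤)
    {N : Submodule R M} (hN : N.FG) (h : N ≤ I • N) : N = ⊥ := by
  obtain ⟨r, hr, hrN⟩ := exists_sub_one_mem_and_smul_eq_zero_of_fg_of_le_smul I N hN h
  have hr₀ : r ≠ 0 := by
    rintro rfl
    exact hI (I.eq_top_of_isUnit_mem hr (by simp))
  exact (Submodule.eq_bot_iff N).mpr fun n hn => (smul_eq_zero.mp (hrN n hn)).resolve_left hr₀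

section Koszul

variable {K : Type*} [CommRing K]

/-- Exactness in degree one of the Koszul complex of `X 0, X 1, X 2` on `M`: every cycle
`(u, v, w)` is the boundary of some `(p, q, r)`. -/
structure KoszulExact (K : Type*) [CommRing K] (M : Type*) [AddCommGroup M]
    [Module (MvPolynomial (Fin 3) K) M] : Prop where
  exists_boundary {u v w : M} : (X 0 : MvPolynomial (Fin 3) K) • u +
      (X 1 : MvPolynomial (Fin 3) K) • v + (X 2 : MvPolynomial (Fin 3) K) • w = 0 →
    ∃ p q r : M, u = (X 1 : MvPolynomial (Fin 3) K) • p + (X 2 : MvPolynomial (Fin 3) K) • q ∧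
      v = (X 2 : MvPolynomial (Fin 3) K) • r - (X 0 : MvPolynomial (Fin 3) K) • p ∧
      w = -((X 0 : MvPolynomial (Fin 3) K) • q + (X 1 : MvPolynomial (Fin 3) K) • r)

variable {M N : Type*} [AddCommGroup M] [Module (MvPolynomial (Fin 3) K) M]
  [AddCommGroup N] [Module (MvPolynomial (Fin 3) K) N]

theorem KoszulExact.of_linearEquiv (e : M ≃ₗ[MvPolynomial (Fin 3) K] N)
    (hM : KoszulExact K M) : KoszulExact K N where
  exists_boundary {u v w} h := by
    obtain ⟨p, q, r, hu, hv, hw⟩ := hM.exists_boundary (u := e.symm u) (v := e.symm v)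
      (w := e.symm w) (by simpa using congrArg e.symm h)
    refine ⟨e p, e q, e r, e.symm.injective ?_, e.symm.injective ?_, e.symm.injective ?_⟩ <;>
      simp [hu, hv, hw]

theorem KoszulExact.pi {ι : Type*} (hM : KoszulExact K M) : KoszulExact K (ι → M) where
  exists_boundary {u v w} h := by
    choose p q r hu hv hw using fun i =>
      hM.exists_boundary (u := u i) (v := v i) (w := w i) (by simpa using congrFun h i)
    exact ⟨p, q, r, funext hu, funext hv, funext hw⟩

/-- Lifting the Koszul boundary `(p, q, r)` of the images of `α, β, γ` to `F` splits
`X 0 • α + X 1 • β + X 2 • γ` into three relations. -/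
theorem mem_smul_ker_of_koszulExact {F : Type*} [AddCommGroup F]
    [Module (MvPolynomial (Fin 3) K) F] (hM : KoszulExact K M)
    (L : F →ₗ[MvPolynomial (Fin 3) K] M) (hL : Function.Surjective L) {α β γ : F}
    (h : L ((X 0 : MvPolynomial (Fin 3) K) • α + (X 1 : MvPolynomial (Fin 3) K) • β +
      (X 2 : MvPolynomial (Fin 3) K) • γ) = 0) :
    (X 0 : MvPolynomial (Fin 3) K) • α + (X 1 : MvPolynomial (Fin 3) K) • β +
        (X 2 : MvPolynomial (Fin 3) K) • γ ∈
      (Ideal.span {X 0, X 1, X 2} : Ideal (MvPolynomial (Fin 3) K)) • LinearMap.ker L := by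
  obtain ⟨p, q, r, hu, hv, hw⟩ := hM.exists_boundary (by simpa using h)
  obtain ⟨p, rfl⟩ := hL p
  obtain ⟨q, rfl⟩ := hL q
  obtain ⟨r, rfl⟩ := hL r
  have hX : ∀ {x : MvPolynomial (Fin 3) K}, x ∈ ({X 0, X 1, X 2} : Set _) →
      x ∈ (Ideal.span {X 0, X 1, X 2} : Ideal (MvPolynomial (Fin 3) K)) :=
    fun hx => Ideal.subset_span hx
  have hsplit : (X 0 : MvPolynomial (Fin 3) K) • α + (X 1 : MvPolynomial (Fin 3) K) • β +
      (X 2 : MvPolynomial (Fin 3) K) • γ =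
      (X 0 : MvPolynomial (Fin 3) K) • (α - (X 1 : MvPolynomial (Fin 3) K) • p -
        (X 2 : MvPolynomial (Fin 3) K) • q) +
      (X 1 : MvPolynomial (Fin 3) K) • (β - (X 2 : MvPolynomial (Fin 3) K) • r +
        (X 0 : MvPolynomial (Fin 3) K) • p) +
      (X 2 : MvPolynomial (Fin 3) K) • (γ + (X 0 : MvPolynomial (Fin 3) K) • q +
        (X 1 : MvPolynomial (Fin 3) K) • r) := by
    module
  rw [hsplit]
  refine add_mem (add_mem (Submodule.smul_mem_smul (hX (by simp)) ?_)
    (Submodule.smul_mem_smul (hX (by simp)) ?_)) (Submodule.smul_mem_smul (hX (by simp)) ?_) <;>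
    simp [hu, hv, hw]

variable [IsDomain K]

theorem koszulExact_self : KoszulExact K (MvPolynomial (Fin 3) K) where
  exists_boundary {u v w} h := by
    set κ := aeval (R := K) (Function.update X 2 0 : Fin 3 → MvPolynomial (Fin 3) K)
    have hκ : X 0 * κ u = X 1 * -κ v := by
      have := congrArg κ h
      simp only [κ, smul_eq_mul, map_add, map_mul, map_zero, aeval_X, Function.update_self,
        Function.update_of_ne (by decide : (0 : Fin 3) ≠ 2),
        Function.update_of_ne (by decide : (1 : Fin 3) ≠ 2), zero_mul, add_zero] at this
      linear_combination this
    obtain ⟨p, hup, hvp⟩ := exists_eq_X_mul_of_X_mul_eq_X_mul (by decide) hκ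
    obtain ⟨q, hq⟩ := X_dvd_sub_aeval_update_zero 2 u
    obtain ⟨r, hr⟩ := X_dvd_sub_aeval_update_zero 2 v
    simp only [smul_eq_mul] at h ⊢
    refine ⟨p, q, r, by linear_combination hq + hup, by linear_combination hr - hvp,
      mul_left_cancel₀ (X_ne_zero 2) ?_⟩
    linear_combination h - X 0 * (hq + hup) - X 1 * (hr - hvp)

theorem koszulExact_of_free [Module.Free (MvPolynomial (Fin 3) K) M]
    [Module.Finite (MvPolynomial (Fin 3) K) M] : KoszulExact K M :=
  koszulExact_self.pi.of_linearEquiv (Module.Free.chooseBasis _ M).equivFun.symm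

/-- A Koszul cycle of `ker φ` is the boundary of some `(p, q, r)` in `F`; applying `φ` gives
`(φ p, φ q, φ r) = h • (X 2, -X 1, X 0)` with `h • 𝔪 ⊆ range φ`. Saturation gives `h = φ g`,
and subtracting the Koszul boundary of `g` moves `p, q, r` into `ker φ`. -/
theorem koszulExact_ker_of_colon_le {F : Type*} [AddCommGroup F]
    [Module (MvPolynomial (Fin 3) K) F] (hF : KoszulExact K F)
    (φ : F →ₗ[MvPolynomial (Fin 3) K] MvPolynomial (Fin 3) K)
    (hsat : (LinearMap.range φ).colon
      (Ideal.span {X 0, X 1, X 2} : Ideal (MvPolynomial (Fin 3) K)) ≤ LinearMap.range φ) :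
    KoszulExact K (LinearMap.ker φ) where
  exists_boundary {u v w} huvw := by
    obtain ⟨p, q, r, hu, hv, hw⟩ := hF.exists_boundary (u := u) (v := v) (w := w)
      (by simpa [Subtype.ext_iff] using huvw)
    have hφu := congrArg φ hu
    have hφv := congrArg φ hv
    simp only [map_add, map_sub, map_smul, smul_eq_mul, LinearMap.mem_ker.mp u.2,
      LinearMap.mem_ker.mp v.2] at hφu hφv
    obtain ⟨h, hp, hq⟩ := exists_eq_X_mul_of_X_mul_eq_X_mul (i := 1) (j := 2) (by decide)
      (g := φ p) (h := φ (-q)) (by rw [map_neg]; linear_combination -hφu)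
    have hr : φ r = X 0 * h :=
      mul_left_cancel₀ (X_ne_zero 2) (by linear_combination -hφv + X 0 * hp)
    obtain ⟨g, rfl⟩ : h ∈ LinearMap.range φ := hsat <| Ideal.mem_colon_span_triple.mpr
      ⟨⟨r, by rw [hr, mul_comm]⟩, ⟨-q, by rw [hq, mul_comm]⟩, ⟨p, by rw [hp, mul_comm]⟩⟩
    rw [map_neg, neg_eq_iff_eq_neg] at hq
    refine ⟨⟨p - (X 2 : MvPolynomial (Fin 3) K) • g, by simp [hp]⟩,
      ⟨q + (X 1 : MvPolynomial (Fin 3) K) • g, by simp [hq]⟩,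
      ⟨r - (X 0 : MvPolynomial (Fin 3) K) • g, by simp [hr]⟩, ?_, ?_, ?_⟩ <;>
      ext1 <;>
      simp only [Submodule.coe_add, Submodule.coe_sub, Submodule.coe_neg, Submodule.coe_smul]
    · linear_combination (norm := module) hu
    · linear_combination (norm := module) hv
    · linear_combination (norm := module) hw

/-- For `x ∈ range φ : 𝔪` write `x * X i = φ (A i)`. The vectors `X i • A j - X j • A i` form a
Koszul cycle of `ker φ`; reading off its boundary coordinatewise gives `A 0 = X 0 • W - r` with
`r ∈ ker φ`, whence `x = φ W`. -/
theorem colon_le_of_koszulExact_ker {ι : Type*}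
    (φ : (ι → MvPolynomial (Fin 3) K) →ₗ[MvPolynomial (Fin 3) K] MvPolynomial (Fin 3) K)
    (hK : KoszulExact K (LinearMap.ker φ)) :
    (LinearMap.range φ).colon (Ideal.span {X 0, X 1, X 2} : Ideal (MvPolynomial (Fin 3) K)) ≤
      LinearMap.range φ := by
  intro x hx
  obtain ⟨⟨A₀, hA₀⟩, ⟨A₁, hA₁⟩, ⟨A₂, hA₂⟩⟩ := Ideal.mem_colon_span_triple.mp hx
  obtain ⟨-, ⟨q, hq⟩, ⟨r, hr⟩, -, -, hboundary⟩ := hK.exists_boundary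
    (u := ⟨(X 2 : MvPolynomial (Fin 3) K) • A₁ - (X 1 : MvPolynomial (Fin 3) K) • A₂, by
      simp only [LinearMap.mem_ker, map_sub, map_smul, smul_eq_mul, hA₁, hA₂]; ring⟩)
    (v := ⟨(X 0 : MvPolynomial (Fin 3) K) • A₂ - (X 2 : MvPolynomial (Fin 3) K) • A₀, by
      simp only [LinearMap.mem_ker, map_sub, map_smul, smul_eq_mul, hA₀, hA₂]; ring⟩)
    (w := ⟨(X 1 : MvPolynomial (Fin 3) K) • A₀ - (X 0 : MvPolynomial (Fin 3) K) • A₁, by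
      simp only [LinearMap.mem_ker, map_sub, map_smul, smul_eq_mul, hA₀, hA₁]; ring⟩)
    (by ext1; simp only [Submodule.coe_add, Submodule.coe_smul, Submodule.coe_zero]; module)
  simp only [Subtype.ext_iff, Submodule.coe_neg, Submodule.coe_add,
    Submodule.coe_smul] at hboundary
  choose W hW using fun i => exists_eq_X_mul_of_X_mul_eq_X_mul (i := 1) (j := 0) (by decide)
    (g := A₀ i + r i) (h := A₁ i - q i) (by
      have := congrFun hboundary i
      simp only [Pi.sub_apply, Pi.neg_apply, Pi.add_apply, Pi.smul_apply, smul_eq_mul] at this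
      linear_combination this)
  have hA₀W : A₀ = (X 0 : MvPolynomial (Fin 3) K) • W - r := by
    ext1 i
    simp [← (hW i).1]
  refine ⟨W, mul_left_cancel₀ (X_ne_zero 0) ?_⟩
  rw [← smul_eq_mul, ← map_smul, mul_comm, ← hA₀, hA₀W, map_sub, LinearMap.mem_ker.mp hr,
    sub_zero]

end Koszul

section Generators

variable {σ K ι : Type*}

open Finset in
theorem Submodule.exists_finset_isHomogeneous_span [CommRing K] [Fintype ι]
    {S : Submodule (MvPolynomial σ K) (ι → MvPolynomial σ K)} (hS : S.FG)
    (hhc : ∀ v ∈ S, ∀ k, homogeneousComponent k ∘ v ∈ S) :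
    ∃ s : Finset (ι → MvPolynomial σ K), (∀ v ∈ s, ∃ d, ∀ i, (v i).IsHomogeneous d) ∧
      span (MvPolynomial σ K) s = S := by
  classical
  obtain ⟨s₀, rfl⟩ := hS
  set N := s₀.sup fun v => univ.sup fun i => (v i).totalDegree
  refine ⟨(s₀ ×ˢ range (N + 1)).image fun p => homogeneousComponent p.2 ∘ p.1, ?_, ?_⟩
  · simp only [mem_image, Prod.exists]
    rintro _ ⟨v, k, -, rfl⟩
    exact ⟨k, fun i => homogeneousComponent_isHomogeneous k (v i)⟩
  refine le_antisymm (span_le.mpr ?_) (span_le.mpr fun v hv => ?_)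
  · simp only [coe_image, Set.image_subset_iff]
    rintro ⟨v, k⟩ hvk
    exact hhc v (subset_span (mem_product.mp hvk).1) k
  · have hdecomp : v = ∑ k ∈ range (N + 1), homogeneousComponent k ∘ v := by
      funext i
      rw [Finset.sum_apply]
      exact (sum_range_homogeneousComponent ((le_sup (f := fun i => (v i).totalDegree)
        (mem_univ i)).trans (le_sup (f := fun v : ι → MvPolynomial σ K =>
          univ.sup fun i => (v i).totalDegree) hv))).symm
    rw [SetLike.mem_coe, hdecomp]
    exact sum_mem fun k hk =>
      subset_span (mem_image.mpr ⟨(v, k), mem_product.mpr ⟨hv, hk⟩, rfl⟩)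

theorem Submodule.exists_finset_isHomogeneous_span_irredundant [CommRing K] [Fintype ι]
    {S : Submodule (MvPolynomial σ K) (ι → MvPolynomial σ K)} (hS : S.FG)
    (hhc : ∀ v ∈ S, ∀ k, homogeneousComponent k ∘ v ∈ S) :
    ∃ s : Finset (ι → MvPolynomial σ K), (∀ v ∈ s, ∃ d, ∀ i, (v i).IsHomogeneous d) ∧
      span (MvPolynomial σ K) s = S ∧ ∀ v ∈ s, v ∉ span (MvPolynomial σ K) (↑s \ {v}) := by
  classical
  obtain ⟨s, -, ⟨hhom, hspan⟩, hmin⟩ := exists_minimal_le_of_wellFoundedLT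
    (fun t : Finset (ι → MvPolynomial σ K) =>
      (∀ v ∈ t, ∃ d, ∀ i, (v i).IsHomogeneous d) ∧ span (MvPolynomial σ K) t = S)
    _ (exists_finset_isHomogeneous_span hS hhc).choose_spec
  refine ⟨s, hhom, hspan, fun v hv hv' => ?_⟩
  have hle := hmin ⟨fun w hw => hhom w (Finset.mem_of_mem_erase hw), ?_⟩ (Finset.erase_subset v s)
  · exact Finset.notMem_erase v s (hle hv)
  · rw [Finset.coe_erase, ← hspan, ← span_insert_eq_span hv', Set.insert_sdiff_singleton,
      Set.insert_eq_of_mem (Finset.mem_coe.mpr hv)]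

/-- The degree `d v` part of a relation is again a relation; its coefficient on `v` is the
constant term of the original coefficient, which must therefore vanish by irredundancy. -/
theorem constantCoeff_eq_zero_of_sum_smul_eq_zero [Field K] {s : Finset (ι → MvPolynomial σ K)}
    (hhom : ∀ v ∈ s, ∃ d, ∀ i, (v i).IsHomogeneous d)
    (hirr : ∀ v ∈ s, v ∉ Submodule.span (MvPolynomial σ K) (↑s \ {v}))
    {c : s → MvPolynomial σ K} (hc : ∑ v, c v • (v : ι → MvPolynomial σ K) = 0) (v : s) :
    constantCoeff (c v) = 0 := by
  classical
  choose d hd using fun w : s => hhom w w.2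
  set c' : s → MvPolynomial σ K :=
    fun w => if d w ≤ d v then homogeneousComponent (d v - d w) (c w) else 0
  have hc' : ∑ w, c' w • (w : ι → MvPolynomial σ K) = 0 := by
    funext i
    have := congrArg (homogeneousComponent (d v)) (congrFun hc i)
    simp only [Finset.sum_apply, Pi.smul_apply, smul_eq_mul, map_sum, Pi.zero_apply, map_zero,
      homogeneousComponent_mul_of_isHomogeneous (hd _ i)] at this
    simpa only [Finset.sum_apply, Pi.smul_apply, smul_eq_mul, c', ite_mul, zero_mul,
      Pi.zero_apply] using this
  have hv : c' v = C (constantCoeff (c v)) := by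
    simp [c', homogeneousComponent_zero, constantCoeff_eq]
  by_contra h₀
  refine hirr v v.2 ?_
  rw [← Finset.add_sum_erase _ _ (Finset.mem_univ v), add_eq_zero_iff_eq_neg] at hc'
  rw [← Submodule.smul_mem_iff_of_isUnit _ ((isUnit_iff_ne_zero.mpr h₀).map C), ← hv, hc']
  exact neg_mem (Submodule.sum_mem _ fun w hw => Submodule.smul_mem _ _
    (Submodule.subset_span ⟨w.2, fun h => Finset.ne_of_mem_erase hw (Subtype.ext h)⟩))

end Generators

theorem Submodule.free_of_koszulExact {K ι : Type*} [Field K] [Fintype ι]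
    {S : Submodule (MvPolynomial (Fin 3) K) (ι → MvPolynomial (Fin 3) K)}
    (hhc : ∀ v ∈ S, ∀ k, homogeneousComponent k ∘ v ∈ S) (hK : KoszulExact K S) :
    Module.Free (MvPolynomial (Fin 3) K) S := by
  obtain ⟨s, hhom, hspan, hirr⟩ :=
    exists_finset_isHomogeneous_span_irredundant (IsNoetherian.noetherian S) hhc
  let L := Fintype.linearCombination (MvPolynomial (Fin 3) K)
    fun v : s => (⟨v, hspan ▸ subset_span v.2⟩ : S)
  have hLc : ∀ c, (L c : ι → MvPolynomial (Fin 3) K) = ∑ v, c v • (v : ι → _) := fun c => by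
    simp only [L, Fintype.linearCombination_apply, Submodule.coe_sum, Submodule.coe_smul]
  have hL : Function.Surjective L := by
    rintro ⟨x, hx⟩
    rw [← hspan, show (s : Set (ι → MvPolynomial (Fin 3) K)) = Set.range ((↑) : s → _) by simp]
      at hx
    obtain ⟨c, hc⟩ := (mem_span_range_iff_exists_fun _).mp hx
    exact ⟨c, Subtype.ext ((hLc c).trans hc)⟩
  have hker : LinearMap.ker L = ⊥ := by
    refine eq_bot_of_le_smul_of_ne_top isMaximal_span_X_fin_three.ne_top
      (IsNoetherian.noetherian _) fun c hc => ?_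
    have hrel : ∑ v, c v • (v : ι → MvPolynomial (Fin 3) K) = 0 := by
      rw [← hLc, LinearMap.mem_ker.mp hc, Submodule.coe_zero]
    choose α β γ hαβγ using fun v => mem_span_triple.mp <|
      span_X_fin_three_eq_ker_constantCoeff.ge <|
        constantCoeff_eq_zero_of_sum_smul_eq_zero hhom hirr hrel v
    have hc_eq : c = (X 0 : MvPolynomial (Fin 3) K) • α + (X 1 : MvPolynomial (Fin 3) K) • β +
        (X 2 : MvPolynomial (Fin 3) K) • γ := by
      funext v
      simp [← hαβγ v, mul_comm]
    rw [hc_eq] at hc ⊢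
    exact mem_smul_ker_of_koszulExact hK L hL hc
  exact Module.Free.of_equiv (LinearEquiv.ofBijective L ⟨LinearMap.ker_eq_bot.mp hker, hL⟩)

theorem syzygy_free_iff_saturated_general (n : ℕ)
    (a b c d : MvPolynomial (Fin 3) ℂ)
    (ha : a.IsHomogeneous n) (hb : b.IsHomogeneous n)
    (hc : c.IsHomogeneous n) (hd : d.IsHomogeneous n) :
    (Module.Free (MvPolynomial (Fin 3) ℂ) (syzygyModule a b c d) ↔
      ¬ ∃ x : MvPolynomial (Fin 3) ℂ,
        (Ideal.span {X 0, X 1, X 2} : Ideal (MvPolynomial (Fin 3) ℂ)) =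
          (Ideal.span {a, b, c, d}).colon (Ideal.span {x})) ∧
    ((¬ ∃ x : MvPolynomial (Fin 3) ℂ,
        (Ideal.span {X 0, X 1, X 2} : Ideal (MvPolynomial (Fin 3) ℂ)) =
          (Ideal.span {a, b, c, d}).colon (Ideal.span {x})) ↔
      (Ideal.span {a, b, c, d}).colon
          (Ideal.span {X 0, X 1, X 2} : Ideal (MvPolynomial (Fin 3) ℂ)) =
        Ideal.span {a, b, c, d}) := by
  set φ := Fintype.linearCombination (MvPolynomial (Fin 3) ℂ) ![a, b, c, d]
  have hsyz : syzygyModule a b c d = LinearMap.ker φ := by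
    ext A
    simp [φ, syzygyModule, Fintype.linearCombination_apply, Fin.sum_univ_four]
  have hI : Ideal.span {a, b, c, d} = LinearMap.range φ := by
    rw [Fintype.range_linearCombination]
    congr 1
    ext x
    simp [eq_comm, or_comm, or_left_comm]
  have hhom : ∀ i, (![a, b, c, d] i).IsHomogeneous n := by
    intro i
    fin_cases i <;> assumption
  rw [Ideal.not_exists_eq_colon_span_singleton_iff isMaximal_span_X_fin_three, hsyz, hI]
  refine ⟨⟨fun _ => le_antisymm (colon_le_of_koszulExact_ker φ koszulExact_of_free)
    Ideal.le_colon, fun hsat => ?_⟩, Iff.rfl⟩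
  exact Submodule.free_of_koszulExact (fun v hv k => homogeneousComponent_comp_mem_ker hhom hv k)
    (koszulExact_ker_of_colon_le koszulExact_self.pi φ hsat.le)

/-- For homogeneous `a,b,c,d` of degree `n ≥ 1` with
`gcd(a,b,c,d) = 1` and at least one common zero in `ℂ³∖{0}`, with
`I = ⟨a,b,c,d⟩` and `𝔪 = ⟨s,t,u⟩`, the following are equivalent:
(1) `Syz(a,b,c,d)` is a free `R`-module;
(2) `𝔪` is not the annihilator of any element of `R/I` (i.e. `𝔪` is not an
associated prime of `R/I`);
(3) `I : 𝔪 = I` (i.e. `I` is saturated). -/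
theorem syzygy_free_iff_saturated (n : ℕ) (hn : 1 ≤ n)
    (a b c d : MvPolynomial (Fin 3) ℂ)
    (ha : a.IsHomogeneous n) (hb : b.IsHomogeneous n)
    (hc : c.IsHomogeneous n) (hd : d.IsHomogeneous n)
    (hgcd : ∀ g : MvPolynomial (Fin 3) ℂ, g ∣ a → g ∣ b → g ∣ c → g ∣ d → IsUnit g)
    (hbp : ∃ p : Fin 3 → ℂ, p ≠ 0 ∧
      eval p a = 0 ∧ eval p b = 0 ∧ eval p c = 0 ∧ eval p d = 0) :
    (Module.Free (MvPolynomial (Fin 3) ℂ) (syzygyModule a b c d) ↔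
      ¬ ∃ x : MvPolynomial (Fin 3) ℂ,
        (Ideal.span {X 0, X 1, X 2} : Ideal (MvPolynomial (Fin 3) ℂ)) =
          (Ideal.span {a, b, c, d}).colon (Ideal.span {x})) ∧
    ((¬ ∃ x : MvPolynomial (Fin 3) ℂ,
        (Ideal.span {X 0, X 1, X 2} : Ideal (MvPolynomial (Fin 3) ℂ)) =
          (Ideal.span {a, b, c, d}).colon (Ideal.span {x})) ↔
      (Ideal.span {a, b, c, d}).colon
          (Ideal.span {X 0, X 1, X 2} : Ideal (MvPolynomial (Fin 3) ℂ)) =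
        Ideal.span {a, b, c, d}) :=
  syzygy_free_iff_saturated_general n a b c d ha hb hc hd
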